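/- arXiv:1606.04418 — 6 statements merged into one kernel-verified Lean document; each statement's English description precedes it below -/
import Mathlib

section
/- Let |Ψ_s⟩ be an n-partite state with full local ranks and suppose a local operator A = A_1 ⊗ ... ⊗ A_n maps g|Ψ_s⟩ to a multiple of h|Ψ_s⟩, where g = g_1⊗...⊗g_n and h = h_1⊗...⊗h_n are invertible local operators. Then A is of the form h_1 S^(1) g_1^{-1} ⊗ ... ⊗ h_n S^(n) g_n^{-1} for some S = S^(1)⊗...⊗S^(n) in the local stabilizer of |Ψ_s⟩ (up to an overall scalar). -/
/-!
Put `B_i = h_i⁻¹ A_i g_i`, so that `B ψ = c ψ` for `ψ = |Ψ_s⟩`. Flattening `ψ` at site `i` into a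
matrix `F` (rows: site `i`, columns: the other sites) gives `ρ_i = F Fᴴ`, and `B ψ = c ψ` becomes
`B_i F Cᵀ = c F`, where `C` is the tensor product of the other factors of `B`. Hence
`B_i (F Cᵀ Fᴴ) = c ρ_i` is invertible, and so is `B_i`. Rescaling the `B_i` by nonzero scalars
whose product is `c⁻¹` turns `B` into an element `S` of the local stabilizer, and
`A_i = h_i B_i g_i⁻¹` is then a nonzero multiple of `h_i S_i g_i⁻¹`.
-/

open Matrix

noncomputable section

/-- Action of a local (product) operator `A = A_1 ⊗ ... ⊗ A_n` on a vector of
`⊗_i ℂ^{d_i}`, represented as a function `(∀ i, Fin (d i)) → ℂ`. -/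
def applyLocal {n : ℕ} {d : Fin n → ℕ} (A : ∀ i, Matrix (Fin (d i)) (Fin (d i)) ℂ)
    (ψ : (∀ i, Fin (d i)) → ℂ) : (∀ i, Fin (d i)) → ℂ :=
  fun x => ∑ y : ∀ i, Fin (d i), (∏ i, A i (x i) (y i)) * ψ y

/-- The single-party reduced density matrix of `ψ` at site `i`. -/
def reduced {n : ℕ} {d : Fin n → ℕ} (ψ : (∀ i, Fin (d i)) → ℂ) (i : Fin n) :
    Matrix (Fin (d i)) (Fin (d i)) ℂ :=
  fun a b => ∑ x : ∀ j, Fin (d j),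
    if x i = a then ψ x * (starRingEnd ℂ) (ψ (Function.update x i b)) else 0

section LocalAction

variable {n : ℕ} {d : Fin n → ℕ}

theorem applyLocal_one (ψ : (∀ i, Fin (d i)) → ℂ) :
    applyLocal (fun i => (1 : Matrix (Fin (d i)) (Fin (d i)) ℂ)) ψ = ψ := by
  funext x
  simp [applyLocal, one_apply, Fintype.prod_boole, ← funext_iff]

theorem applyLocal_mul (X Y : ∀ i, Matrix (Fin (d i)) (Fin (d i)) ℂ)
    (ψ : (∀ i, Fin (d i)) → ℂ) :
    applyLocal (fun i => X i * Y i) ψ = applyLocal X (applyLocal Y ψ) := by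
  funext x
  simp only [applyLocal, mul_apply, Fintype.prod_sum, Finset.sum_mul, Finset.mul_sum]
  rw [Finset.sum_comm]
  refine Finset.sum_congr rfl fun y _ => Finset.sum_congr rfl fun z _ => ?_
  rw [Finset.prod_mul_distrib, mul_assoc]

theorem applyLocal_smul_right (A : ∀ i, Matrix (Fin (d i)) (Fin (d i)) ℂ) (c : ℂ)
    (ψ : (∀ i, Fin (d i)) → ℂ) : applyLocal A (c • ψ) = c • applyLocal A ψ := by
  funext x
  simp only [applyLocal, Pi.smul_apply, smul_eq_mul, Finset.mul_sum, mul_left_comm]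

theorem applyLocal_smul_left (ν : Fin n → ℂ) (X : ∀ i, Matrix (Fin (d i)) (Fin (d i)) ℂ)
    (ψ : (∀ i, Fin (d i)) → ℂ) :
    applyLocal (fun i => ν i • X i) ψ = (∏ i, ν i) • applyLocal X ψ := by
  funext x
  simp only [applyLocal, Matrix.smul_apply, smul_eq_mul, Pi.smul_apply, Finset.mul_sum,
    Finset.prod_mul_distrib, mul_assoc]

end LocalAction

section Flattening

variable {n : ℕ} {d : Fin n → ℕ}

def flattenAt (ψ : (∀ i, Fin (d i)) → ℂ) (i : Fin n) :
    Matrix (Fin (d i)) (∀ j : {j // j ≠ i}, Fin (d j)) ℂ :=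
  Matrix.of fun a r => ψ ((Equiv.piSplitAt i _).symm (a, r))

def offSiteProd (B : ∀ i, Matrix (Fin (d i)) (Fin (d i)) ℂ) (i : Fin n) :
    Matrix (∀ j : {j // j ≠ i}, Fin (d j)) (∀ j : {j // j ≠ i}, Fin (d j)) ℂ :=
  Matrix.of fun r s => ∏ j : {j // j ≠ i}, B j (r j) (s j)

@[simp]
theorem piSplitAt_symm_apply_self (i : Fin n) (a : Fin (d i))
    (r : ∀ j : {j // j ≠ i}, Fin (d j)) :
    (Equiv.piSplitAt i (fun j => Fin (d j))).symm (a, r) i = a :=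
  congrArg Prod.fst ((Equiv.piSplitAt i (fun j => Fin (d j))).apply_symm_apply (a, r))

@[simp]
theorem piSplitAt_symm_apply_coe (i : Fin n) (a : Fin (d i))
    (r : ∀ j : {j // j ≠ i}, Fin (d j)) (j : {j // j ≠ i}) :
    (Equiv.piSplitAt i (fun j => Fin (d j))).symm (a, r) j = r j :=
  congrFun
    (congrArg Prod.snd ((Equiv.piSplitAt i (fun j => Fin (d j))).apply_symm_apply (a, r))) j

theorem update_piSplitAt_symm (i : Fin n) (a b : Fin (d i))
    (r : ∀ j : {j // j ≠ i}, Fin (d j)) :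
    Function.update ((Equiv.piSplitAt i _).symm (a, r)) i b
      = (Equiv.piSplitAt i (fun j => Fin (d j))).symm (b, r) := by
  apply (Equiv.piSplitAt i _).injective
  ext j
  · simp
  · simp [j.2]

theorem reduced_eq_flattenAt_mul_conjTranspose (ψ : (∀ i, Fin (d i)) → ℂ) (i : Fin n) :
    reduced ψ i = flattenAt ψ i * (flattenAt ψ i)ᴴ := by
  ext a b
  rw [reduced, ← (Equiv.piSplitAt i _).symm.sum_comp, Fintype.sum_prod_type]
  simp [flattenAt, mul_apply, update_piSplitAt_symm]

theorem flattenAt_applyLocal (B : ∀ i, Matrix (Fin (d i)) (Fin (d i)) ℂ)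
    (ψ : (∀ i, Fin (d i)) → ℂ) (i : Fin n) :
    flattenAt (applyLocal B ψ) i = B i * flattenAt ψ i * (offSiteProd B i)ᵀ := by
  ext a r
  rw [flattenAt, of_apply, applyLocal, ← (Equiv.piSplitAt i _).symm.sum_comp,
    Fintype.sum_prod_type, Finset.sum_comm]
  simp only [mul_apply, flattenAt, offSiteProd, transpose_apply, of_apply, Finset.sum_mul]
  refine Finset.sum_congr rfl fun s _ => Finset.sum_congr rfl fun b _ => ?_
  rw [Fintype.prod_eq_mul_prod_subtype_ne _ i]
  simp only [piSplitAt_symm_apply_self, piSplitAt_symm_apply_coe]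
  ring

theorem flattenAt_smul (c : ℂ) (ψ : (∀ i, Fin (d i)) → ℂ) (i : Fin n) :
    flattenAt (c • ψ) i = c • flattenAt ψ i :=
  rfl

theorem isUnit_of_applyLocal_eq_smul {ψ : (∀ i, Fin (d i)) → ℂ}
    {B : ∀ i, Matrix (Fin (d i)) (Fin (d i)) ℂ} {c : ℂ} (i : Fin n) (hc : c ≠ 0)
    (hρ : IsUnit (reduced ψ i)) (hB : applyLocal B ψ = c • ψ) : IsUnit (B i) := by
  have key : B i * (flattenAt ψ i * (offSiteProd B i)ᵀ * (flattenAt ψ i)ᴴ)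
      = Units.mk0 c hc • reduced ψ i := by
    rw [reduced_eq_flattenAt_mul_conjTranspose, ← Matrix.mul_assoc, ← Matrix.mul_assoc,
      ← flattenAt_applyLocal, hB, flattenAt_smul, Units.smul_mk0, smul_mul]
  exact isUnit_of_mul_isUnit_left (key ▸ (isUnit_smul_iff _ _).mpr hρ)

end Flattening

theorem exists_ne_zero_prod_eq {ι G₀ : Type*} [Fintype ι] [Nonempty ι]
    [CommGroupWithZero G₀] {c : G₀} (hc : c ≠ 0) :
    ∃ ν : ι → G₀, (∀ i, ν i ≠ 0) ∧ ∏ i, ν i = c := by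
  classical
  obtain ⟨i₀⟩ := ‹Nonempty ι›
  refine ⟨Pi.mulSingle i₀ c, fun i => ?_, by simp⟩
  rcases eq_or_ne i i₀ with rfl | hi
  · simpa using hc
  · simp [hi]

/-- if a local operator `A` maps `g|Ψ_s⟩` to a multiple of `h|Ψ_s⟩`,
where `|Ψ_s⟩` has full local ranks and `g, h` are invertible local operators, then
`A = h_1 S^(1) g_1⁻¹ ⊗ ⋯ ⊗ h_n S^(n) g_n⁻¹` (up to an overall scalar, distributed as
local scalars `c i`) for some product operator `S` in the local stabilizer of `|Ψ_s⟩`. -/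
theorem stmt0 {n : ℕ} {d : Fin n → ℕ}
    (Ψs : (∀ i, Fin (d i)) → ℂ)
    (hfull : ∀ i, IsUnit (reduced Ψs i))
    (A g h : ∀ i, Matrix (Fin (d i)) (Fin (d i)) ℂ)
    (hg : ∀ i, IsUnit (g i)) (hh : ∀ i, IsUnit (h i))
    (c : ℂ) (hc : c ≠ 0)
    (hmap : applyLocal A (applyLocal g Ψs) = c • applyLocal h Ψs) :
    ∃ S : ∀ i, Matrix (Fin (d i)) (Fin (d i)) ℂ,
      (∀ i, IsUnit (S i)) ∧ applyLocal S Ψs = Ψs ∧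
      ∃ μ : Fin n → ℂ, (∀ i, μ i ≠ 0) ∧
        ∀ i, A i = μ i • (h i * S i * (g i)⁻¹) := by
  have hgdet i : IsUnit (g i).det := (isUnit_iff_isUnit_det _).mp (hg i)
  have hhdet i : IsUnit (h i).det := (isUnit_iff_isUnit_det _).mp (hh i)
  set B := fun i => (h i)⁻¹ * (A i * g i)
  have hB : applyLocal B Ψs = c • Ψs := by
    calc applyLocal B Ψs
        = applyLocal (fun i => (h i)⁻¹) (applyLocal A (applyLocal g Ψs)) := by
          simp only [B, applyLocal_mul]
      _ = c • applyLocal (fun i => (h i)⁻¹ * h i) Ψs := by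
          rw [hmap, applyLocal_smul_right, applyLocal_mul]
      _ = c • Ψs := by simp only [nonsing_inv_mul _ (hhdet _), applyLocal_one]
  have hBunit i : IsUnit (B i) := isUnit_of_applyLocal_eq_smul i hc (hfull i) hB
  rcases isEmpty_or_nonempty (Fin n) with _ | _
  · exact ⟨fun _ => 1, isEmptyElim, applyLocal_one Ψs, fun _ => 1, isEmptyElim, isEmptyElim⟩
  obtain ⟨ν, hν, hνprod⟩ := exists_ne_zero_prod_eq (ι := Fin n) (inv_ne_zero hc)
  refine ⟨fun i => ν i • B i, fun i => ?_, ?_, fun i => (ν i)⁻¹, fun i => inv_ne_zero (hν i),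
    fun i => ?_⟩
  · exact (isUnit_smul_iff (Units.mk0 _ (hν i)) _).mpr (hBunit i)
  · rw [applyLocal_smul_left, hB, hνprod, smul_smul, inv_mul_cancel₀ hc, one_smul]
  · simp only [Matrix.mul_smul, Matrix.smul_mul, smul_smul, inv_mul_cancel₀ (hν i), one_smul, B,
      mul_nonsing_inv_cancel_left _ _ (hhdet i), mul_nonsing_inv_cancel_right _ _ (hgdet i)]
end
end

section
/- Let A_1 = r_1 h S_1 g^{-1} and A_2 = r_2 h S_2 g^{-1} with r_1, r_2 > 0, h, g invertible, and S_1, S_2 unitary. If A_1†A_1 is proportional to A_2†A_2, then S := S_1 S_2† commutes with H = h†h. Conversely, if [H, S_1 S_2†] = 0 then A_1†A_1 ∝ A_2†A_2. -/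
open Matrix
open scoped ComplexOrder

/-!
With `H = hᴴh` one has `Aᵢᴴ Aᵢ = rᵢ² (g⁻¹)ᴴ (Sᵢᴴ H Sᵢ) g⁻¹`, so since `g` is invertible,
proportionality means `S₁ᴴ H S₁ = λ S₂ᴴ H S₂`, while `[H, S₁S₂ᴴ] = 0` means
`S₁ᴴ H S₁ = S₂ᴴ H S₂`. Unitary conjugation preserves the trace, so `tr H = λ tr H`: either
`λ = 1`, or `tr H = 0` and then `H = 0` because `H` is positive semidefinite.
-/

theorem commute_mul_star_iff_star_mul_mul_eq {R : Type*} [Monoid R] [StarMul R] {U V : R}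
    (hU : U ∈ unitary R) (hV : V ∈ unitary R) (a : R) :
    Commute a (U * star V) ↔ star U * a * U = star V * a * V := by
  have hUU := Unitary.star_mul_self_of_mem hU
  have hUU' := Unitary.mul_star_self_of_mem hU
  have hVV := Unitary.star_mul_self_of_mem hV
  have hVV' := Unitary.mul_star_self_of_mem hV
  constructor
  · intro hc
    calc star U * a * U = star U * (a * (U * star V)) * V := by
          simp only [mul_assoc, hVV, mul_one]
      _ = star U * (U * star V * a) * V := by rw [hc.eq]
      _ = star V * a * V := by simp only [← mul_assoc, hUU, one_mul]
  · intro he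
    calc a * (U * star V) = U * (star U * a * U) * star V := by
          simp only [← mul_assoc, hUU', one_mul]
      _ = U * (star V * a * V) * star V := by rw [he]
      _ = U * star V * a := by simp only [mul_assoc, hVV', mul_one]

namespace Matrix

variable {n : Type*} [Fintype n]

theorem conjTranspose_smul_mul_mul_mul_self {α : Type*} [CommSemiring α] [StarRing α] (a : α)
    (h S g : Matrix n n α) :
    (a • (h * S * g))ᴴ * (a • (h * S * g)) = gᴴ * ((star a * a) • (Sᴴ * (hᴴ * h) * S)) * g := by
  simp only [conjTranspose_smul, conjTranspose_mul, Matrix.smul_mul, Matrix.mul_smul, smul_smul,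
    mul_assoc, mul_comm a]

variable [DecidableEq n]

theorem conjTranspose_mul_mul_left_inj {α : Type*} [Semiring α] [StarRing α]
    {M X Y : Matrix n n α} (hM : IsUnit M) : Mᴴ * X * M = Mᴴ * Y * M ↔ X = Y :=
  ⟨fun h ↦ ((isUnit_conjTranspose M).mpr hM).mul_left_cancel (hM.mul_right_cancel h),
    fun h ↦ h ▸ rfl⟩

theorem trace_conjTranspose_mul_mul_of_mem_unitaryGroup {α : Type*} [CommRing α] [StarRing α]
    {U : Matrix n n α} (hU : U ∈ unitaryGroup n α) (H : Matrix n n α) :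
    (Uᴴ * H * U).trace = H.trace := by
  rw [trace_mul_cycle, ← star_eq_conjTranspose, Unitary.mul_star_self_of_mem hU, one_mul]

theorem PosSemidef.conjTranspose_mul_mul_eq_of_eq_smul {𝕜 : Type*} [RCLike 𝕜]
    {H U V : Matrix n n 𝕜} (hH : H.PosSemidef) (hU : U ∈ unitaryGroup n 𝕜)
    (hV : V ∈ unitaryGroup n 𝕜) {c : 𝕜}
    (h : Uᴴ * H * U = c • (Vᴴ * H * V)) : Uᴴ * H * U = Vᴴ * H * V := by
  have htr : H.trace = c * H.trace := by
    simpa only [trace_smul, trace_conjTranspose_mul_mul_of_mem_unitaryGroup hU,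
      trace_conjTranspose_mul_mul_of_mem_unitaryGroup hV, smul_eq_mul] using congrArg trace h
  by_cases hc : c = 1
  · rwa [hc, one_smul] at h
  · have hH0 : H = 0 := hH.trace_eq_zero_iff.mp <| by
      have : (1 - c) * H.trace = 0 := by linear_combination htr
      exact (mul_eq_zero.mp this).resolve_left (sub_ne_zero.mpr (Ne.symm hc))
    simp [hH0]

end Matrix

theorem stmt4_general {d : ℕ} (h g S₁ S₂ : Matrix (Fin d) (Fin d) ℂ)
    (hg : IsUnit g)
    (hS₁ : S₁ ∈ Matrix.unitaryGroup (Fin d) ℂ) (hS₂ : S₂ ∈ Matrix.unitaryGroup (Fin d) ℂ)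
    (r₁ r₂ : ℝ) (hr₁ : 0 < r₁) (hr₂ : 0 < r₂)
    (A₁ A₂ : Matrix (Fin d) (Fin d) ℂ)
    (hA₁ : A₁ = (r₁ : ℂ) • (h * S₁ * g⁻¹)) (hA₂ : A₂ = (r₂ : ℂ) • (h * S₂ * g⁻¹)) :
    ((∃ c : ℝ, 0 < c ∧ A₁ᴴ * A₁ = (c : ℂ) • (A₂ᴴ * A₂)) →
        Commute (hᴴ * h) (S₁ * S₂ᴴ)) ∧
    (Commute (hᴴ * h) (S₁ * S₂ᴴ) →
        ∃ c : ℝ, 0 < c ∧ A₁ᴴ * A₁ = (c : ℂ) • (A₂ᴴ * A₂)) := by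
  have hr₁' : (r₁ : ℂ) ≠ 0 := by exact_mod_cast hr₁.ne'
  have hr₂' : (r₂ : ℂ) ≠ 0 := by exact_mod_cast hr₂.ne'
  have hgram : ∀ c : ℂ, A₁ᴴ * A₁ = c • (A₂ᴴ * A₂) ↔
      (r₁ : ℂ) ^ 2 • (S₁ᴴ * (hᴴ * h) * S₁) = (c * (r₂ : ℂ) ^ 2) • (S₂ᴴ * (hᴴ * h) * S₂) := by
    intro c
    rw [hA₁, hA₂, conjTranspose_smul_mul_mul_mul_self, conjTranspose_smul_mul_mul_mul_self,
      ← Matrix.smul_mul c, ← Matrix.mul_smul _ c, smul_smul,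
      conjTranspose_mul_mul_left_inj (isUnit_nonsing_inv_iff.mpr hg)]
    simp only [Complex.star_def, Complex.conj_ofReal, sq]
  rw [← star_eq_conjTranspose S₂, commute_mul_star_iff_star_mul_mul_eq hS₁ hS₂]
  simp only [star_eq_conjTranspose]
  constructor
  · rintro ⟨c, -, hc⟩
    refine (posSemidef_conjTranspose_mul_self h).conjTranspose_mul_mul_eq_of_eq_smul hS₁ hS₂
      (c := c * r₂ ^ 2 / r₁ ^ 2) ?_
    rw [hgram] at hc
    rw [div_eq_inv_mul, ← smul_smul, eq_inv_smul_iff₀ (pow_ne_zero 2 hr₁'), hc]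
  · intro he
    refine ⟨r₁ ^ 2 / r₂ ^ 2, by positivity, (hgram _).mpr ?_⟩
    rw [he]
    congr 1
    push_cast
    field_simp

/-- for `A₁ = r₁ h S₁ g⁻¹`, `A₂ = r₂ h S₂ g⁻¹` with `r₁, r₂ > 0`,
`h, g` invertible and `S₁, S₂` unitary: `A₁ᴴA₁ ∝ A₂ᴴA₂` implies `[H, S₁S₂ᴴ] = 0`
where `H = hᴴh`, and conversely. -/
theorem stmt4 {d : ℕ} (h g S₁ S₂ : Matrix (Fin d) (Fin d) ℂ)
    (hh : IsUnit h) (hg : IsUnit g)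
    (hS₁ : S₁ ∈ Matrix.unitaryGroup (Fin d) ℂ) (hS₂ : S₂ ∈ Matrix.unitaryGroup (Fin d) ℂ)
    (r₁ r₂ : ℝ) (hr₁ : 0 < r₁) (hr₂ : 0 < r₂)
    (A₁ A₂ : Matrix (Fin d) (Fin d) ℂ)
    (hA₁ : A₁ = (r₁ : ℂ) • (h * S₁ * g⁻¹)) (hA₂ : A₂ = (r₂ : ℂ) • (h * S₂ * g⁻¹)) :
    ((∃ c : ℝ, 0 < c ∧ A₁ᴴ * A₁ = (c : ℂ) • (A₂ᴴ * A₂)) →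
        Commute (hᴴ * h) (S₁ * S₂ᴴ)) ∧
    (Commute (hᴴ * h) (S₁ * S₂ᴴ) →
        ∃ c : ℝ, 0 < c ∧ A₁ᴴ * A₁ = (c : ℂ) • (A₂ᴴ * A₂)) :=
  stmt4_general h g S₁ S₂ hg hS₁ hS₂ r₁ r₂ hr₁ hr₂ A₁ A₂ hA₁ hA₂
end

section
/- Let H be a positive definite 2×2 matrix with Bloch vector h⃗ = 2(x,x,x), x > 0. Then [H, U] = 0 where U = √(iσ_y)√(iσ_x), but [H, σ_i] ≠ 0 for every i ∈ {1,2,3}. -/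
open Matrix ComplexOrder

noncomputable section

def σ1 : Matrix (Fin 2) (Fin 2) ℂ := !![0, 1; 1, 0]
def σ2 : Matrix (Fin 2) (Fin 2) ℂ := !![0, -Complex.I; Complex.I, 0]
def σ3 : Matrix (Fin 2) (Fin 2) ℂ := !![1, 0; 0, -1]

/-- `U = √(iσ_y)·√(iσ_x)` with the principal roots `(𝟙+iσ)/√2`. -/
def Umat : Matrix (Fin 2) (Fin 2) ℂ :=
  ((Real.sqrt 2 : ℂ)⁻¹ • (1 + Complex.I • σ2)) * ((Real.sqrt 2 : ℂ)⁻¹ • (1 + Complex.I • σ1))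

/-- the positive definite matrix `H` with Bloch vector `2(x,x,x)`,
`x > 0`, commutes with `U = √(iσ_y)√(iσ_x)` but with no Pauli matrix. -/
theorem stmt12 (x : ℝ) (hx : 0 < x)
    (H : Matrix (Fin 2) (Fin 2) ℂ)
    (hdef : H = ((1 : ℂ) / 2) •
      ((1 : Matrix (Fin 2) (Fin 2) ℂ) + ((2 * x : ℝ) : ℂ) • σ1 +
        ((2 * x : ℝ) : ℂ) • σ2 + ((2 * x : ℝ) : ℂ) • σ3))
    (hpos : H.PosDef) :
    Commute H Umat ∧ ¬ Commute H σ1 ∧ ¬ Commute H σ2 ∧ ¬ Commute H σ3 := by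
  subst hdef
  refine ⟨?_, ?_, ?_, ?_⟩
  · show _ * _ = _ * _
    ext i j
    fin_cases i <;> fin_cases j <;>
      simp [Umat, σ1, σ2, σ3, Matrix.mul_apply, Fin.sum_univ_two, Matrix.one_apply,
        Complex.ext_iff] <;>
      constructor <;> nlinarith [Real.mul_self_sqrt (show (0:ℝ) ≤ 2 by norm_num)]
  · intro h
    have := congrFun (congrFun h 0) 0
    simp [σ1, σ2, σ3, Matrix.mul_apply, Fin.sum_univ_two, Matrix.one_apply,
      Complex.ext_iff, hx.ne'] at this
    linarith
  · intro h
    have := congrFun (congrFun h 0) 0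
    simp [σ1, σ2, σ3, Matrix.mul_apply, Fin.sum_univ_two, Matrix.one_apply,
      Complex.ext_iff, hx.ne'] at this
    linarith
  · intro h
    have := congrFun (congrFun h 0) 1
    simp [σ1, σ2, σ3, Matrix.mul_apply, Fin.sum_univ_two, Matrix.one_apply,
      Complex.ext_iff, hx.ne'] at this
    linarith [this.1]
end
end

section
/- Let H_1 be the trace-normalized positive matrix with Bloch vector proportional to (1,1,1). Then H_1 commutes with U² where U = √(iσ_y)√(iσ_x); consequently, if h_1†h_1 = H_1 then h_1 U² h_1^{-1} is unitary. -/
open Matrix ComplexOrder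

noncomputable section

/-!
`U = (1 + i(σ1 + σ2 + σ3))/2` is a rotation about the axis `(1,1,1)`, so `U` (hence `U²`) commutes
with every matrix `a + b(σ1 + σ2 + σ3)`, in particular with `H₁`. `U` is unitary as a product of
the unitaries `(1 + iσ)/√2`. If `h` is invertible and `hᴴh` commutes with a unitary `V`, then
`hVh⁻¹` is unitary: `(hVh⁻¹)ᴴ(hVh⁻¹) = h⁻ᴴ Vᴴ (hᴴh) V h⁻¹ = h⁻ᴴ (hᴴh) h⁻¹ = 1`.
-/

theorem inv_sqrt_two_mul_self : (Real.sqrt 2 : ℂ)⁻¹ * (Real.sqrt 2 : ℂ)⁻¹ = 1 / 2 := by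
  rw [← mul_inv, ← Complex.ofReal_mul, Real.mul_self_sqrt zero_le_two]; norm_num

theorem Units.mul_mul_inv_mem_unitary {M : Type*} [Monoid M] [StarMul M] (h : Mˣ) {V : M}
    (hV : V ∈ unitary M) (hc : Commute (star (h : M) * h) V) :
    (h : M) * V * ↑h⁻¹ ∈ unitary M := by
  -- `h⁻¹ (h⁻¹)⋆ = (h⋆ h)⁻¹`; this is what the second identity `x x⋆ = 1` needs
  have hc' : Commute (↑h⁻¹ * star (↑h⁻¹ : M)) V := by
    simpa [← Units.coe_star_inv, ← Units.coe_star] using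
      (show Commute (↑(star h * h) : M) V by simpa using hc).units_inv_left
  rw [Unitary.mem_iff]
  constructor
  · calc star ((h : M) * V * ↑h⁻¹) * ((h : M) * V * ↑h⁻¹)
        = star (↑h⁻¹ : M) * (star V * (star (h : M) * h * V)) * ↑h⁻¹ := by
          simp only [star_mul, mul_assoc]
      _ = star (↑h⁻¹ : M) * ((star V * V) * (star (h : M) * h)) * ↑h⁻¹ := by
          rw [hc.eq]; simp only [mul_assoc]
      _ = star ((h : M) * ↑h⁻¹) * (h * ↑h⁻¹) := by
          rw [Unitary.star_mul_self_of_mem hV, one_mul, star_mul]; simp only [mul_assoc]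
      _ = 1 := by simp
  · calc ((h : M) * V * ↑h⁻¹) * star ((h : M) * V * ↑h⁻¹)
        = h * (V * (↑h⁻¹ * star (↑h⁻¹ : M)) * star V) * star (h : M) := by
          simp only [star_mul, mul_assoc]
      _ = h * (↑h⁻¹ * star (↑h⁻¹ : M)) * (V * star V) * star (h : M) := by
          rw [← hc'.eq]; simp only [mul_assoc]
      _ = (h * ↑h⁻¹) * star ((h : M) * ↑h⁻¹) := by
          rw [Unitary.mul_star_self_of_mem hV, mul_one, star_mul]; simp only [mul_assoc]
      _ = 1 := by simp

theorem sqrt_two_inv_smul_one_add_I_smul_mem_unitary {A : Type*} [Ring A] [StarRing A]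
    [Algebra ℂ A] [StarModule ℂ A] {σ : A} (hσ : IsSelfAdjoint σ) (hσσ : σ * σ = 1) :
    (Real.sqrt 2 : ℂ)⁻¹ • (1 + Complex.I • σ) ∈ unitary A := by
  have hstar : star ((Real.sqrt 2 : ℂ)⁻¹ • (1 + Complex.I • σ))
      = (Real.sqrt 2 : ℂ)⁻¹ • (1 - Complex.I • σ) := by
    simp [star_smul, hσ.star_eq, sub_eq_add_neg]
  have hprod : (1 - Complex.I • σ) * (1 + Complex.I • σ) = (2 : ℂ) • (1 : A) ∧
      (1 + Complex.I • σ) * (1 - Complex.I • σ) = (2 : ℂ) • (1 : A) := by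
    simp only [mul_add, mul_sub, add_mul, sub_mul, smul_mul_smul_comm, hσσ, Complex.I_mul_I,
      one_mul, mul_one]
    constructor <;> module
  rw [Unitary.mem_iff, hstar, smul_mul_smul_comm, smul_mul_smul_comm, inv_sqrt_two_mul_self,
    hprod.1, hprod.2, smul_smul]
  norm_num

theorem isSelfAdjoint_σ1 : IsSelfAdjoint σ1 := by
  ext i j; fin_cases i <;> fin_cases j <;> simp [σ1]

theorem isSelfAdjoint_σ2 : IsSelfAdjoint σ2 := by
  ext i j; fin_cases i <;> fin_cases j <;> simp [σ2]

theorem σ1_mul_self : σ1 * σ1 = 1 := by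
  ext i j; fin_cases i <;> fin_cases j <;> simp [σ1]

theorem σ2_mul_self : σ2 * σ2 = 1 := by
  ext i j; fin_cases i <;> fin_cases j <;> simp [σ2]

theorem σ2_mul_σ1 : σ2 * σ1 = -Complex.I • σ3 := by
  ext i j; fin_cases i <;> fin_cases j <;> simp [σ1, σ2, σ3]

theorem Umat_mem_unitaryGroup : Umat ∈ unitaryGroup (Fin 2) ℂ :=
  mul_mem (sqrt_two_inv_smul_one_add_I_smul_mem_unitary isSelfAdjoint_σ2 σ2_mul_self)
    (sqrt_two_inv_smul_one_add_I_smul_mem_unitary isSelfAdjoint_σ1 σ1_mul_self)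

theorem Umat_eq : Umat = (1 / 2 : ℂ) • (1 + Complex.I • (σ1 + σ2 + σ3)) := by
  rw [Umat, smul_mul_smul_comm, inv_sqrt_two_mul_self]
  congr 1
  simp only [mul_add, add_mul, smul_mul_smul_comm, σ2_mul_σ1, Complex.I_mul_I, one_mul, mul_one]
  module

theorem commute_half_smul_one_add_smul_σ_sum_Umat (t : ℂ) :
    Commute ((1 / 2 : ℂ) • (1 + t • σ1 + t • σ2 + t • σ3)) Umat := by
  have hS : Commute (1 + t • (σ1 + σ2 + σ3)) (1 + Complex.I • (σ1 + σ2 + σ3)) := by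
    rw [commute_iff_eq]
    simp only [mul_add, add_mul, smul_mul_smul_comm, one_mul, mul_one, mul_comm t]
    abel
  rw [Umat_eq, show 1 + t • σ1 + t • σ2 + t • σ3 = 1 + t • (σ1 + σ2 + σ3) by
    simp only [smul_add, add_assoc]]
  exact (hS.smul_left _).smul_right _

theorem stmt15_general (t : ℝ) (H₁ : Matrix (Fin 2) (Fin 2) ℂ)
    (hdef : H₁ = ((1 : ℂ) / 2) •
      ((1 : Matrix (Fin 2) (Fin 2) ℂ) + (t : ℂ) • σ1 + (t : ℂ) • σ2 + (t : ℂ) • σ3)) :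
    Commute H₁ (Umat ^ 2) ∧
    ∀ h₁ : Matrix (Fin 2) (Fin 2) ℂ, IsUnit h₁ → h₁ᴴ * h₁ = H₁ →
      (h₁ * Umat ^ 2 * h₁⁻¹) ∈ Matrix.unitaryGroup (Fin 2) ℂ := by
  have hcomm : Commute H₁ (Umat ^ 2) :=
    hdef ▸ (commute_half_smul_one_add_smul_σ_sum_Umat t).pow_right 2
  refine ⟨hcomm, fun h₁ hunit hH => ?_⟩
  have hconj := hunit.unit.mul_mul_inv_mem_unitary (pow_mem Umat_mem_unitaryGroup 2)
    (by rwa [IsUnit.unit_spec, star_eq_conjTranspose, hH])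
  simpa [Matrix.coe_units_inv] using hconj

/-- a trace-normalized positive matrix `H₁` with Bloch vector
proportional to `(1,1,1)` commutes with `U²`; consequently, for any invertible
`h₁` with `h₁ᴴh₁ = H₁`, the operator `h₁ U² h₁⁻¹` is unitary. -/
theorem stmt15 (t : ℝ) (H₁ : Matrix (Fin 2) (Fin 2) ℂ)
    (hdef : H₁ = ((1 : ℂ) / 2) •
      ((1 : Matrix (Fin 2) (Fin 2) ℂ) + (t : ℂ) • σ1 + (t : ℂ) • σ2 + (t : ℂ) • σ3))
    (hpos : H₁.PosDef) :
    Commute H₁ (Umat ^ 2) ∧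
    ∀ h₁ : Matrix (Fin 2) (Fin 2) ℂ, IsUnit h₁ → h₁ᴴ * h₁ = H₁ →
      (h₁ * Umat ^ 2 * h₁⁻¹) ∈ Matrix.unitaryGroup (Fin 2) ℂ :=
  stmt15_general t H₁ hdef
end
end

section
/- Conversely, given S_1,...,S_m ∈ S_{Ψ_s}, probabilities p_i > 0 summing to 1, positive definite H with G_1 = Σ_i p_i (S_i^(1))† H S_i^(1), and [G_k, S_i^(k)] = 0 for all k ≥ 2 and all i, the operators A_i = √p_i · h (S_i^(1)) g_1^{-1} (where h†h = H) form a valid measurement: Σ_i A_i†A_i = 1, where trace normalizations are chosen so g_1†g_1 = G_1. -/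
open Matrix ComplexOrder

namespace Matrix

theorem conjTranspose_ofReal_sqrt_smul_mul_self {l n : Type*} [Fintype l]
    (A : Matrix l n ℂ) {r : ℝ} (hr : 0 ≤ r) :
    ((Real.sqrt r : ℂ) • A)ᴴ * ((Real.sqrt r : ℂ) • A) = (r : ℂ) • (Aᴴ * A) := by
  rw [conjTranspose_smul, Matrix.smul_mul, Matrix.mul_smul, smul_smul, Complex.star_def,
    Complex.conj_ofReal, ← Complex.ofReal_mul, Real.mul_self_sqrt hr]

variable {ι l n R : Type*} [Fintype ι] [Fintype l] [Fintype n] [DecidableEq n]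
  [CommRing R] [StarRing R]

theorem sum_conjTranspose_mul_mul_nonsing_inv_eq_one (A : ι → Matrix l n R)
    {g : Matrix n n R} (hg : IsUnit g) (hG : gᴴ * g = ∑ i, (A i)ᴴ * A i) :
    ∑ i, (A i * g⁻¹)ᴴ * (A i * g⁻¹) = 1 := by
  have hinv : g * g⁻¹ = 1 := mul_nonsing_inv g ((isUnit_iff_isUnit_det g).mp hg)
  calc ∑ i, (A i * g⁻¹)ᴴ * (A i * g⁻¹)
      = (g⁻¹)ᴴ * (∑ i, (A i)ᴴ * A i) * g⁻¹ := by
        simp only [conjTranspose_mul, Finset.mul_sum, Finset.sum_mul, Matrix.mul_assoc]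
    _ = (g * g⁻¹)ᴴ * (g * g⁻¹) := by
        rw [← hG, conjTranspose_mul, Matrix.mul_assoc, Matrix.mul_assoc, Matrix.mul_assoc]
    _ = 1 := by rw [hinv, conjTranspose_one, Matrix.one_mul]

end Matrix

theorem stmt17_general {n m : ℕ} {d : Fin (n + 1) → ℕ}
    (S : Fin m → ∀ k, Matrix (Fin (d k)) (Fin (d k)) ℂ)
    (p : Fin m → ℝ) (hp : ∀ i, 0 < p i)
    (g : ∀ k, Matrix (Fin (d k)) (Fin (d k)) ℂ) (hg : ∀ k, IsUnit (g k))
    (H h : Matrix (Fin (d 0)) (Fin (d 0)) ℂ)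
    (hhH : hᴴ * h = H)
    (hG : (g 0)ᴴ * g 0 = ∑ i, (p i : ℂ) • ((S i 0)ᴴ * H * S i 0)) :
    ∑ i, ((Real.sqrt (p i) : ℂ) • (h * S i 0 * (g 0)⁻¹))ᴴ *
      ((Real.sqrt (p i) : ℂ) • (h * S i 0 * (g 0)⁻¹)) = 1 := by
  simp only [← smul_mul_assoc (_ : ℂ) (_ : Matrix (Fin (d 0)) (Fin (d 0)) ℂ) (g 0)⁻¹]
  refine sum_conjTranspose_mul_mul_nonsing_inv_eq_one _ (hg 0) ?_
  simp_rw [hG, conjTranspose_ofReal_sqrt_smul_mul_self _ (hp _).le, ← hhH, conjTranspose_mul,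
    Matrix.mul_assoc]

/-- Lemma 2, sufficiency of the measurement: given unitaries
`S_i^(1)`, probabilities `p_i`, a positive definite `H = hᴴh` with
`G₁ = Σ_i p_i (S_i^(1))ᴴ H S_i^(1)` and `g₁ᴴg₁ = G₁`, the operators
`A_i = √p_i · h S_i^(1) g₁⁻¹` form a valid measurement: `Σ_i A_iᴴA_i = 𝟙`.
(The commutation conditions `[G_k, S_i^(k)] = 0` for `k ≥ 2` are included as in
the lemma.) -/
theorem stmt17 {n m : ℕ} {d : Fin (n + 1) → ℕ}
    (S : Fin m → ∀ k, Matrix (Fin (d k)) (Fin (d k)) ℂ)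
    (hSu : ∀ i k, S i k ∈ Matrix.unitaryGroup (Fin (d k)) ℂ)
    (p : Fin m → ℝ) (hp : ∀ i, 0 < p i) (hpsum : ∑ i, p i = 1)
    (g : ∀ k, Matrix (Fin (d k)) (Fin (d k)) ℂ) (hg : ∀ k, IsUnit (g k))
    (hcomm : ∀ k, k ≠ 0 → ∀ i, Commute ((g k)ᴴ * g k) (S i k))
    (H h : Matrix (Fin (d 0)) (Fin (d 0)) ℂ)
    (hH : H.PosDef) (hhH : hᴴ * h = H)
    (hG : (g 0)ᴴ * g 0 = ∑ i, (p i : ℂ) • ((S i 0)ᴴ * H * S i 0)) :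
    ∑ i, ((Real.sqrt (p i) : ℂ) • (h * S i 0 * (g 0)⁻¹))ᴴ *
      ((Real.sqrt (p i) : ℂ) • (h * S i 0 * (g 0)⁻¹)) = 1 :=
  stmt17_general S p hp g hg H h hhH hG
end

section
/- Let h_1, h_2 be invertible 2×2 matrices such that neither H_1 = h_1†h_1 nor H_2 = h_2†h_2 commutes with any Pauli matrix σ_j (j=1,2,3). Then for the symmetry group S = {σ_i^{⊗n}}_{i=0}^3, the state (h_1 ⊗ h_2 ⊗ 1^{⊗(n-2)})|Ψ_s⟩ fails the reachability conditions: there is no S ∈ S with [H_i, S^(i)] = 0 for all parties i except exactly one, and noncommuting for that one. -/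
open Matrix

noncomputable section

def pauli : Fin 4 → Matrix (Fin 2) (Fin 2) ℂ
  | 0 => 1
  | 1 => σ1
  | 2 => σ2
  | 3 => σ3

theorem eq_of_not_commute_of_forall_ne_commute {ι M : Type*} [Mul M] {H : ι → M} {S : M}
    {k : ι} (hk : ∀ i, i ≠ k → Commute (H i) S) {a : ι} (ha : ¬ Commute (H a) S) : a = k :=
  by_contra fun hak => ha (hk a hak)

theorem stmt19_general {n : ℕ} (h₁ h₂ : Matrix (Fin 2) (Fin 2) ℂ)
    (hnc₁ : ∀ j : Fin 4, j ≠ 0 → ¬ Commute (h₁ᴴ * h₁) (pauli j))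
    (hnc₂ : ∀ j : Fin 4, j ≠ 0 → ¬ Commute (h₂ᴴ * h₂) (pauli j))
    (H : Fin (n + 2) → Matrix (Fin 2) (Fin 2) ℂ)
    (hH0 : H 0 = h₁ᴴ * h₁) (hH1 : H 1 = h₂ᴴ * h₂) :
    ¬ ∃ j : Fin 4, j ≠ 0 ∧ ∃ k : Fin (n + 2),
      (∀ i, i ≠ k → Commute (H i) (pauli j)) ∧ ¬ Commute (H k) (pauli j) := by
  rintro ⟨j, hj, k, hcomm, -⟩
  have h0k : (0 : Fin (n + 2)) = k :=
    eq_of_not_commute_of_forall_ne_commute hcomm (hH0 ▸ hnc₁ j hj)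
  have h1k : (1 : Fin (n + 2)) = k :=
    eq_of_not_commute_of_forall_ne_commute hcomm (hH1 ▸ hnc₂ j hj)
  exact zero_ne_one (h0k.trans h1k.symm)

/-- if neither `H₁ = h₁ᴴh₁` nor `H₂ = h₂ᴴh₂` commutes with any
Pauli matrix `σ_j` (`j = 1,2,3`), then for the symmetry group `{σ_i^{⊗n}}` the
state `(h₁ ⊗ h₂ ⊗ 𝟙^{⊗(n-2)})|Ψ_s⟩` fails the reachability conditions of
Theorem 1: no non-identity `σ_j^{⊗n}` commutes with all single-party operators
`H_i` except exactly one (and fails to commute with that one). -/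
theorem stmt19 {n : ℕ} (h₁ h₂ : Matrix (Fin 2) (Fin 2) ℂ)
    (hinv₁ : IsUnit h₁) (hinv₂ : IsUnit h₂)
    (hnc₁ : ∀ j : Fin 4, j ≠ 0 → ¬ Commute (h₁ᴴ * h₁) (pauli j))
    (hnc₂ : ∀ j : Fin 4, j ≠ 0 → ¬ Commute (h₂ᴴ * h₂) (pauli j))
    (H : Fin (n + 2) → Matrix (Fin 2) (Fin 2) ℂ)
    (hH0 : H 0 = h₁ᴴ * h₁) (hH1 : H 1 = h₂ᴴ * h₂)
    (hHi : ∀ i : Fin (n + 2), i ≠ 0 → i ≠ 1 →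
      H i = ((1 : ℂ) / 2) • (1 : Matrix (Fin 2) (Fin 2) ℂ)) :
    ¬ ∃ j : Fin 4, j ≠ 0 ∧ ∃ k : Fin (n + 2),
      (∀ i, i ≠ k → Commute (H i) (pauli j)) ∧ ¬ Commute (H k) (pauli j) :=
  stmt19_general h₁ h₂ hnc₁ hnc₂ H hH0 hH1
end
end
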